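/- arXiv:2510.10229 — 2 statements merged into one kernel-verified Lean document; each statement's English description precedes it below -/
import Mathlib

section
/- Let K ∈ ℕ, N ∈ ℕ with N > 0, let x_{k,n} ∈ ℂ^d for k ∈ {1,…,K}, n ∈ {1,…,N}, let y_k be points and φ any function assigning to each y_k a point φ(y_k) ∈ ℂ^d. Then for any p ∈ [1,∞), (1/K) Σ_k (1/N²) Σ_{n,n'} ‖x_{k,n} − x_{k,n'}‖^p ≤ (2^p/K) Σ_k (1/N) Σ_n ‖x_{k,n} − φ(y_k)‖^p. In particular half the average kernel size (Kersize/2, with Kersize = ((1/K) Σ_k (1/N²) Σ_{n,n'} ‖x_{k,n}−x_{k,n'}‖^p)^{1/p}) is a lower bound for the reconstruction error ((1/(KN)) Σ_{k,n} ‖x_{k,n} − φ(y_k)‖^p)^{1/p}. -/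
lemma real_rpow_add_le (a b : ℝ) (ha : 0 ≤ a) (hb : 0 ≤ b) {p : ℝ} (hp : 1 ≤ p) :
    (a + b) ^ p ≤ 2 ^ (p - 1) * (a ^ p + b ^ p) := by
  lift a to NNReal using ha
  lift b to NNReal using hb
  have := NNReal.rpow_add_le_mul_rpow_add_rpow a b hp
  exact_mod_cast this

/-- Half the average kernel size is a lower bound for the reconstruction error
of any map `φ` (equal feasible-set sizes). -/
theorem half_kernel_size_lower_bound (d K N : ℕ) (hK : 0 < K) (hN : 0 < N)
    (p : ℝ) (hp : 1 ≤ p) (s : Seminorm ℂ (Fin d → ℂ))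
    (x : Fin K → Fin N → (Fin d → ℂ))
    (Y : Type*) (y : Fin K → Y) (φ : Y → (Fin d → ℂ)) :
    ((1 / (K : ℝ)) * ∑ k, (1 / (N : ℝ) ^ 2) * ∑ n, ∑ n', s (x k n - x k n') ^ p
      ≤ (2 ^ p / (K : ℝ)) * ∑ k, (1 / (N : ℝ)) * ∑ n, s (x k n - φ (y k)) ^ p)
    ∧
    (1 / 2) * ((1 / (K : ℝ)) * ∑ k, (1 / (N : ℝ) ^ 2) *
        ∑ n, ∑ n', s (x k n - x k n') ^ p) ^ (1 / p)
      ≤ ((1 / ((K : ℝ) * (N : ℝ))) *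
        ∑ k, ∑ n, s (x k n - φ (y k)) ^ p) ^ (1 / p) := by
  have hp0 : (0 : ℝ) < p := lt_of_lt_of_le one_pos hp
  have hNpos : (0 : ℝ) < N := by exact_mod_cast hN
  have hKpos : (0 : ℝ) < K := by exact_mod_cast hK
  -- per-k key inequality
  have key : ∀ k, ∑ n, ∑ n', s (x k n - x k n') ^ p
      ≤ 2 ^ p * ((N : ℝ) * ∑ n, s (x k n - φ (y k)) ^ p) := by
    intro k
    set a : Fin N → ℝ := fun n => s (x k n - φ (y k)) with ha
    have hanonneg : ∀ n, 0 ≤ a n := fun n => apply_nonneg s _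
    have step : ∀ n n', s (x k n - x k n') ^ p
        ≤ 2 ^ (p - 1) * (a n ^ p + a n' ^ p) := by
      intro n n'
      have htri : s (x k n - x k n') ≤ a n + a n' := by
        have h := map_sub_le_add s (x k n - φ (y k)) (x k n' - φ (y k))
        rw [sub_sub_sub_cancel_right] at h
        exact h
      calc s (x k n - x k n') ^ p ≤ (a n + a n') ^ p := by
            apply Real.rpow_le_rpow (apply_nonneg s _) htri (le_of_lt hp0)
        _ ≤ 2 ^ (p - 1) * (a n ^ p + a n' ^ p) :=
            real_rpow_add_le _ _ (hanonneg n) (hanonneg n') hp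
    calc ∑ n, ∑ n', s (x k n - x k n') ^ p
        ≤ ∑ n, ∑ n', 2 ^ (p - 1) * (a n ^ p + a n' ^ p) := by
          apply Finset.sum_le_sum; intro n _
          apply Finset.sum_le_sum; intro n' _
          exact step n n'
      _ = 2 ^ (p - 1) * (2 * ((N : ℝ) * ∑ n, a n ^ p)) := by
          simp only [Finset.sum_add_distrib, Finset.sum_const, Finset.card_univ,
            Fintype.card_fin, nsmul_eq_mul, ← Finset.mul_sum, ← Finset.sum_mul]
          ring
      _ = 2 ^ p * ((N : ℝ) * ∑ n, a n ^ p) := by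
          rw [Real.rpow_sub two_pos, Real.rpow_one]
          ring
  have hsumnn : ∀ k, 0 ≤ ∑ n, s (x k n - φ (y k)) ^ p := by
    intro k
    apply Finset.sum_nonneg
    intro n _
    exact Real.rpow_nonneg (apply_nonneg s _) p
  -- first part
  have first : (1 / (K : ℝ)) * ∑ k, (1 / (N : ℝ) ^ 2) * ∑ n, ∑ n', s (x k n - x k n') ^ p
      ≤ (2 ^ p / (K : ℝ)) * ∑ k, (1 / (N : ℝ)) * ∑ n, s (x k n - φ (y k)) ^ p := by
    rw [show (2:ℝ) ^ p / (K : ℝ) = (1 / (K:ℝ)) * 2 ^ p by ring, mul_assoc]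
    apply mul_le_mul_of_nonneg_left _ (by positivity)
    rw [Finset.mul_sum]
    apply Finset.sum_le_sum
    intro k _
    calc (1 / (N : ℝ) ^ 2) * ∑ n, ∑ n', s (x k n - x k n') ^ p
        ≤ (1 / (N : ℝ) ^ 2) * (2 ^ p * ((N : ℝ) * ∑ n, s (x k n - φ (y k)) ^ p)) :=
          mul_le_mul_of_nonneg_left (key k) (by positivity)
      _ = 2 ^ p * ((1 / (N : ℝ)) * ∑ n, s (x k n - φ (y k)) ^ p) := by
          field_simp
  refine ⟨first, ?_⟩
  -- second part
  set A := (1 / (K : ℝ)) * ∑ k, (1 / (N : ℝ) ^ 2) * ∑ n, ∑ n', s (x k n - x k n') ^ p with hA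
  set B := (1 / ((K : ℝ) * (N : ℝ))) * ∑ k, ∑ n, s (x k n - φ (y k)) ^ p with hB
  have hBnn : 0 ≤ B := by
    apply mul_nonneg (by positivity)
    exact Finset.sum_nonneg fun k _ => hsumnn k
  have hAnn : 0 ≤ A := by
    apply mul_nonneg (by positivity)
    apply Finset.sum_nonneg
    intro k _
    apply mul_nonneg (by positivity)
    apply Finset.sum_nonneg; intro n _
    apply Finset.sum_nonneg; intro n' _
    exact Real.rpow_nonneg (apply_nonneg s _) p
  have hAB : A ≤ 2 ^ p * B := by
    have hswap : ∑ k, (1 / (N : ℝ)) * ∑ n, s (x k n - φ (y k)) ^ p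
        = (1 / (N : ℝ)) * ∑ k, ∑ n, s (x k n - φ (y k)) ^ p :=
      (Finset.mul_sum _ _ _).symm
    rw [hswap] at first
    calc A ≤ (2 ^ p / (K : ℝ)) *
          ((1 / (N : ℝ)) * ∑ k, ∑ n, s (x k n - φ (y k)) ^ p) := first
      _ = 2 ^ p * B := by rw [hB]; ring
  have hroot : A ^ (1 / p) ≤ (2 ^ p * B) ^ (1 / p) :=
    Real.rpow_le_rpow hAnn hAB (by positivity)
  have heq : ((2:ℝ) ^ p * B) ^ (1 / p) = 2 * B ^ (1 / p) := by
    rw [Real.mul_rpow (by positivity) hBnn,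
      ← Real.rpow_mul (by norm_num : (0:ℝ) ≤ 2), mul_one_div, div_self hp0.ne',
      Real.rpow_one]
  rw [heq] at hroot
  linarith
end

section
/- Under the setting of the accuracy-bound theorem with equal feasible-set sizes (K measurements, each feasible set of size N, samples x_{k,n}), let θ assign to each y_k a minimizer θ(y_k) ∈ argmin_z (1/N) Σ_n ‖x_{k,n} − z‖^p. Then (1/2)·Kersize ≤ inf_φ L(φ) = L(θ) ≤ Kersize, where the infimum is over all maps φ assigning an element of ℂ^d to each y_k, Kersize = ((1/K) Σ_k (1/N²) Σ_{n,n'} ‖x_{k,n} − x_{k,n'}‖^p)^{1/p}, and L(φ) = ((1/(KN)) Σ_{k,n} ‖x_{k,n} − φ(y_k)‖^p)^{1/p}. -/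
private lemma two_rpow_aux {a b p : ℝ} (ha : 0 ≤ a) (hb : 0 ≤ b) (hp : 1 ≤ p) :
    (a + b) ^ p ≤ 2 ^ (p - 1) * (a ^ p + b ^ p) := by
  lift a to NNReal using ha
  lift b to NNReal using hb
  have h := NNReal.rpow_add_le_mul_rpow_add_rpow a b hp
  have := (NNReal.coe_le_coe).2 h
  push_cast [NNReal.coe_rpow] at this
  exact_mod_cast this

/-- Accuracy bounds with equal feasible-set sizes: half the average kernel size
is a lower bound on the loss, the per-measurement-minimizer map `θ` attains the
infimum of the loss over all maps, and its loss is at most the kernel size. -/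
theorem accuracy_bounds_equal_sizes (d K N : ℕ) (hK : 0 < K) (hN : 0 < N)
    (p : ℝ) (hp : 1 ≤ p) (s : Seminorm ℂ (Fin d → ℂ))
    (hs : ∀ v, s v = 0 → v = 0)
    (x : Fin K → Fin N → (Fin d → ℂ)) (θ : Fin K → (Fin d → ℂ))
    (hθ : ∀ k : Fin K, ∀ z : Fin d → ℂ,
      (1 / (N : ℝ)) * ∑ n, s (x k n - θ k) ^ p ≤
        (1 / (N : ℝ)) * ∑ n, s (x k n - z) ^ p) :
    (1 / 2) * ((1 / (K : ℝ)) * ∑ k, (1 / (N : ℝ) ^ 2) *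
        ∑ n, ∑ n', s (x k n - x k n') ^ p) ^ (1 / p)
      ≤ ((1 / ((K : ℝ) * (N : ℝ))) * ∑ k, ∑ n, s (x k n - θ k) ^ p) ^ (1 / p)
    ∧
    (∀ φ : Fin K → (Fin d → ℂ),
      ((1 / ((K : ℝ) * (N : ℝ))) * ∑ k, ∑ n, s (x k n - θ k) ^ p) ^ (1 / p) ≤
        ((1 / ((K : ℝ) * (N : ℝ))) * ∑ k, ∑ n, s (x k n - φ k) ^ p) ^ (1 / p))
    ∧
    ((1 / ((K : ℝ) * (N : ℝ))) * ∑ k, ∑ n, s (x k n - θ k) ^ p) ^ (1 / p) ≤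
      ((1 / (K : ℝ)) * ∑ k, (1 / (N : ℝ) ^ 2) *
        ∑ n, ∑ n', s (x k n - x k n') ^ p) ^ (1 / p) := by
  have hp0 : (0:ℝ) < p := lt_of_lt_of_le one_pos hp
  have hNpos : (0:ℝ) < (N:ℝ) := by exact_mod_cast hN
  have hKpos : (0:ℝ) < (K:ℝ) := by exact_mod_cast hK
  set A : ℝ := (1 / (K : ℝ)) * ∑ k, (1 / (N : ℝ) ^ 2) *
      ∑ n, ∑ n', s (x k n - x k n') ^ p with hA_def
  set B : ℝ := (1 / ((K : ℝ) * (N : ℝ))) * ∑ k, ∑ n, s (x k n - θ k) ^ p with hB_def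
  have hterm : ∀ (v : Fin d → ℂ), (0:ℝ) ≤ s v ^ p :=
    fun v => Real.rpow_nonneg (apply_nonneg s v) p
  have hA0 : 0 ≤ A := by
    apply mul_nonneg (by positivity)
    apply Finset.sum_nonneg; intro k _
    apply mul_nonneg (by positivity)
    exact Finset.sum_nonneg fun n _ => Finset.sum_nonneg fun n' _ => hterm _
  have hB0 : 0 ≤ B := by
    apply mul_nonneg (by positivity)
    exact Finset.sum_nonneg fun k _ => Finset.sum_nonneg fun n _ => hterm _
  -- per-measurement minimality without the 1/N factor
  have hmin : ∀ k z, ∑ n, s (x k n - θ k) ^ p ≤ ∑ n, s (x k n - z) ^ p := by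
    intro k z
    have h := hθ k z
    have hN' : (0:ℝ) < 1 / (N:ℝ) := by positivity
    exact le_of_mul_le_mul_left (by simpa [mul_comm] using h) hN'
  -- Part 2: θ is optimal
  have part2 : ∀ φ : Fin K → (Fin d → ℂ), B ^ (1/p) ≤
      ((1 / ((K : ℝ) * (N : ℝ))) * ∑ k, ∑ n, s (x k n - φ k) ^ p) ^ (1/p) := by
    intro φ
    apply Real.rpow_le_rpow hB0 _ (by positivity)
    apply mul_le_mul_of_nonneg_left _ (by positivity)
    exact Finset.sum_le_sum fun k _ => hmin k (φ k)
  -- Part 3: B ≤ A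
  have hBA : B ≤ A := by
    rw [hA_def, hB_def, Finset.mul_sum, Finset.mul_sum]
    apply Finset.sum_le_sum
    intro k _
    have key : ∑ n' : Fin N, ∑ n, s (x k n - θ k) ^ p
        ≤ ∑ n, ∑ n', s (x k n - x k n') ^ p := by
      have h1 : ∑ n' : Fin N, ∑ n, s (x k n - θ k) ^ p
          ≤ ∑ n' : Fin N, ∑ n, s (x k n - x k n') ^ p :=
        Finset.sum_le_sum fun n' _ => hmin k (x k n')
      exact h1.trans_eq Finset.sum_comm
    have hcard : ∑ n' : Fin N, ∑ n, s (x k n - θ k) ^ p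
        = (N:ℝ) * ∑ n, s (x k n - θ k) ^ p := by
      rw [Finset.sum_const, Finset.card_univ, Fintype.card_fin, nsmul_eq_mul]
    calc 1 / ((K : ℝ) * (N : ℝ)) * ∑ n, s (x k n - θ k) ^ p
        = (1/(K:ℝ)) * ((1/(N:ℝ)^2) * ((N:ℝ) * ∑ n, s (x k n - θ k) ^ p)) := by
          field_simp
      _ = (1/(K:ℝ)) * ((1/(N:ℝ)^2) * ∑ n' : Fin N, ∑ n, s (x k n - θ k) ^ p) := by
          rw [hcard]
      _ ≤ (1/(K:ℝ)) * ((1/(N:ℝ)^2) * ∑ n, ∑ n', s (x k n - x k n') ^ p) := by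
          apply mul_le_mul_of_nonneg_left _ (by positivity)
          exact mul_le_mul_of_nonneg_left key (by positivity)
  -- Part 1: A ≤ 2^p * B
  have hA2B : A ≤ 2 ^ p * B := by
    have key : ∀ k, ∑ n, ∑ n', s (x k n - x k n') ^ p
        ≤ 2 ^ p * ((N:ℝ) * ∑ n, s (x k n - θ k) ^ p) := by
      intro k
      have step1 : ∀ n n' : Fin N, s (x k n - x k n') ^ p
          ≤ 2 ^ (p-1) * (s (x k n - θ k) ^ p + s (x k n' - θ k) ^ p) := by
        intro n n'
        have htri : s (x k n - x k n') ≤ s (x k n - θ k) + s (x k n' - θ k) := by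
          have : x k n - x k n' = (x k n - θ k) - (x k n' - θ k) := by ring
          rw [this]
          exact map_sub_le_add s _ _
        calc s (x k n - x k n') ^ p
            ≤ (s (x k n - θ k) + s (x k n' - θ k)) ^ p :=
              Real.rpow_le_rpow (apply_nonneg s _) htri (le_of_lt hp0)
          _ ≤ 2 ^ (p-1) * (s (x k n - θ k) ^ p + s (x k n' - θ k) ^ p) :=
              two_rpow_aux (apply_nonneg s _) (apply_nonneg s _) hp
      calc ∑ n, ∑ n', s (x k n - x k n') ^ p
          ≤ ∑ n, ∑ n', 2 ^ (p-1) * (s (x k n - θ k) ^ p + s (x k n' - θ k) ^ p) :=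
            Finset.sum_le_sum fun n _ => Finset.sum_le_sum fun n' _ => step1 n n'
        _ = 2 ^ (p-1) * ∑ n, ∑ n', (s (x k n - θ k) ^ p + s (x k n' - θ k) ^ p) := by
            simp only [← Finset.mul_sum]
        _ = 2 ^ p * ((N:ℝ) * ∑ n, s (x k n - θ k) ^ p) := by
            have hsum : ∑ n : Fin N, ∑ n' : Fin N,
                (s (x k n - θ k) ^ p + s (x k n' - θ k) ^ p)
                = 2 * ((N:ℝ) * ∑ n, s (x k n - θ k) ^ p) := by
              simp only [Finset.sum_add_distrib, Finset.sum_const, Finset.card_univ,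
                Fintype.card_fin, nsmul_eq_mul, ← Finset.mul_sum]
              ring
            have h2p : (2:ℝ) ^ (p-1) * 2 = 2 ^ p := by
              have h := Real.rpow_add two_pos (p-1) 1
              rw [Real.rpow_one] at h
              rw [← h]; ring_nf
            rw [hsum, ← h2p]; ring
    rw [hA_def, hB_def, Finset.mul_sum, Finset.mul_sum, Finset.mul_sum]
    apply Finset.sum_le_sum
    intro k _
    calc (1/(K:ℝ)) * ((1/(N:ℝ)^2) * ∑ n, ∑ n', s (x k n - x k n') ^ p)
        ≤ (1/(K:ℝ)) * ((1/(N:ℝ)^2) * (2 ^ p * ((N:ℝ) * ∑ n, s (x k n - θ k) ^ p))) := by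
          apply mul_le_mul_of_nonneg_left _ (by positivity)
          exact mul_le_mul_of_nonneg_left (key k) (by positivity)
      _ = 2 ^ p * (1 / ((K:ℝ)*(N:ℝ)) * ∑ n, s (x k n - θ k) ^ p) := by
          field_simp
  have part1 : (1/2) * A ^ (1/p) ≤ B ^ (1/p) := by
    have h1 : A ^ (1/p) ≤ (2 ^ p * B) ^ (1/p) :=
      Real.rpow_le_rpow hA0 hA2B (by positivity)
    have h2 : ((2:ℝ) ^ p * B) ^ (1/p) = 2 * B ^ (1/p) := by
      rw [Real.mul_rpow (by positivity) hB0, ← Real.rpow_mul (by norm_num : (0:ℝ) ≤ 2),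
        mul_one_div, div_self (ne_of_gt hp0), Real.rpow_one]
    rw [h2] at h1
    linarith
  have part3 : B ^ (1/p) ≤ A ^ (1/p) :=
    Real.rpow_le_rpow hB0 hBA (by positivity)
  exact ⟨part1, part2, part3⟩
end
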